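/- arXiv:1001.1120 — 5 statements merged into one kernel-verified Lean document; each statement's English description precedes it below -/
import Mathlib

section
/- In the free algebra k⟨x₁,x₂⟩ with bicharacter p satisfying p₂₂ = q, p₁₁ = q³, p₁₂p₂₁ = q⁻³, the iterated skew commutator [[[[x₁,x₂],x₂],x₂],x₂] expands as x₁x₂⁴ + a₁x₂x₁x₂³ + a₂x₂²x₁x₂² + a₃x₂³x₁x₂ + a₄x₂⁴x₁, where a₁ = −p₁₂(1+q+q²+q³), a₂ = p₁₂²q(1+q+q²)(q²+1), a₃ = −p₁₂³q³(1+q+q²+q³), a₄ = p₁₂⁴q⁶. -/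
/-- Expansion of the iterated skew commutator `[[[[x₁,x₂],x₂],x₂],x₂]` in the
free algebra `k⟨x₁,x₂⟩` with bicharacter satisfying `p₂₂ = q`, `p₁₁ = q³`,
`p₁₂p₂₁ = q⁻³`. -/
theorem stmt2 {k : Type*} [Field k] (q p12 p21 : k) (hq : q ≠ 0)
    (hp : p12 * p21 = (q ^ 3)⁻¹)
    (x1 x2 B D E : FreeAlgebra k (Fin 2))
    (hx1 : x1 = FreeAlgebra.ι k (0 : Fin 2)) (hx2 : x2 = FreeAlgebra.ι k (1 : Fin 2))
    (hB : B = x1 * x2 - p12 • (x2 * x1))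
    (hD : D = B * x2 - (p12 * q) • (x2 * B))
    (hE : E = D * x2 - (p12 * q ^ 2) • (x2 * D)) :
    E * x2 - (p12 * q ^ 3) • (x2 * E)
      = x1 * x2 ^ 4 + (-(p12 * (1 + q + q ^ 2 + q ^ 3))) • (x2 * x1 * x2 ^ 3)
        + (p12 ^ 2 * q * (1 + q + q ^ 2) * (q ^ 2 + 1)) • (x2 ^ 2 * x1 * x2 ^ 2)
        + (-(p12 ^ 3 * q ^ 3 * (1 + q + q ^ 2 + q ^ 3))) • (x2 ^ 3 * x1 * x2)
        + (p12 ^ 4 * q ^ 6) • (x2 ^ 4 * x1) := by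
  subst hE hD hB hx1 hx2
  simp only [smul_sub, sub_mul, mul_sub, smul_smul, smul_mul_assoc, mul_smul_comm,
    mul_assoc, pow_succ, pow_zero, one_mul]
  match_scalars <;> ring
end

section
/- In the free algebra k⟨x₁,x₂⟩ with bicharacter p (p₂₂=q, p₁₁=q³, p₁₂p₂₁=q⁻³) and skew derivations ∂ᵢ, setting D = [[x₁,x₂],x₂], one has ∂₁(D) = (1−q⁻³)(1−q⁻²)x₂² and ∂₂(D) = 0. -/
/-- For `D = [[x₁,x₂],x₂]` in `k⟨x₁,x₂⟩`, one has
`∂₁(D) = (1−q⁻³)(1−q⁻²)x₂²` and `∂₂(D) = 0`. -/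
theorem stmt6 {k : Type*} [Field k] (q p12 p21 : k) (hq : q ≠ 0)
    (hp : p12 * p21 = (q ^ 3)⁻¹)
    (x1 x2 B D : FreeAlgebra k (Fin 2))
    (hx1 : x1 = FreeAlgebra.ι k (0 : Fin 2)) (hx2 : x2 = FreeAlgebra.ι k (1 : Fin 2))
    (hB : B = x1 * x2 - p12 • (x2 * x1))
    (hD : D = B * x2 - (p12 * q) • (x2 * B))
    (d1 d2 : FreeAlgebra k (Fin 2) →ₗ[k] FreeAlgebra k (Fin 2))
    (hd1one : d1 1 = 0) (hd2one : d2 1 = 0)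
    (hd1x1 : d1 x1 = 1) (hd1x2 : d1 x2 = 0)
    (hd2x1 : d2 x1 = 0) (hd2x2 : d2 x2 = 1)
    (hL1x1 : ∀ v, d1 (x1 * v) = v + q ^ 3 • (x1 * d1 v))
    (hL1x2 : ∀ v, d1 (x2 * v) = p21 • (x2 * d1 v))
    (hL2x1 : ∀ v, d2 (x1 * v) = p12 • (x1 * d2 v))
    (hL2x2 : ∀ v, d2 (x2 * v) = v + q • (x2 * d2 v)) :
    d1 D = ((1 - (q ^ 3)⁻¹) * (1 - (q ^ 2)⁻¹)) • x2 ^ 2 ∧ d2 D = 0 := by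
  subst hD hB
  constructor
  · simp only [sub_mul, smul_mul_assoc, mul_sub, mul_smul_comm, mul_assoc,
      map_sub, map_smul, hL1x1, hL1x2, hd1x1, hd1x2, mul_zero, smul_zero,
      mul_one, add_zero, zero_add, sq, mul_add, smul_add, add_mul, smul_smul]
    have hp12 : p12 ≠ 0 := by
      intro h; rw [h, zero_mul] at hp
      exact (inv_ne_zero (pow_ne_zero 3 hq)) hp.symm
    have h21 : p21 = (q ^ 3)⁻¹ * p12⁻¹ := by
      field_simp at hp ⊢; linear_combination hp
    subst h21
    match_scalars <;> field_simp
    all_goals try rw [div_eq_iff (by simp [hq, hp12])]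
    all_goals ring
  · simp only [sub_mul, smul_mul_assoc, mul_sub, mul_smul_comm, mul_assoc,
      map_sub, map_smul, hL2x1, hL2x2, hd2x1, hd2x2, mul_zero, smul_zero,
      mul_one, add_zero, zero_add, mul_add, smul_add, add_mul, smul_smul]
    match_scalars <;> ring
end

section
/- In the free algebra k⟨x₁,x₂⟩ with bicharacter p (p₂₂=q, p₁₁=q³, p₁₂p₂₁=q⁻³), setting B=[x₁,x₂], D=[B,x₂], E=[D,x₂], C=[B,D], one has ∂₁(C) = q²(1−q⁻³)²·x₂·D + p₂₁(1−q⁻³)(q³−q²−q)·E and ∂₂(C)=0, where ∂ᵢ are the skew derivations. -/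
set_option maxHeartbeats 1000000

/-- For `C = [[x₁,x₂],[[x₁,x₂],x₂]]` in `k⟨x₁,x₂⟩`, one has
`∂₁(C) = q²(1−q⁻³)²·x₂·D + p₂₁(1−q⁻³)(q³−q²−q)·E` and `∂₂(C)=0`. -/
theorem stmt9 {k : Type*} [Field k] (q p12 p21 : k) (hq : q ≠ 0)
    (hp : p12 * p21 = (q ^ 3)⁻¹)
    (x1 x2 B D E C : FreeAlgebra k (Fin 2))
    (hx1 : x1 = FreeAlgebra.ι k (0 : Fin 2)) (hx2 : x2 = FreeAlgebra.ι k (1 : Fin 2))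
    (hB : B = x1 * x2 - p12 • (x2 * x1))
    (hD : D = B * x2 - (p12 * q) • (x2 * B))
    (hE : E = D * x2 - (p12 * q ^ 2) • (x2 * D))
    (hC : C = B * D - (q ^ 3 * p12 ^ 2 * p21 * q ^ 2) • (D * B))
    (d1 d2 : FreeAlgebra k (Fin 2) →ₗ[k] FreeAlgebra k (Fin 2))
    (hd1one : d1 1 = 0) (hd2one : d2 1 = 0)
    (hd1x1 : d1 x1 = 1) (hd1x2 : d1 x2 = 0)
    (hd2x1 : d2 x1 = 0) (hd2x2 : d2 x2 = 1)
    (hL1x1 : ∀ v, d1 (x1 * v) = v + q ^ 3 • (x1 * d1 v))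
    (hL1x2 : ∀ v, d1 (x2 * v) = p21 • (x2 * d1 v))
    (hL2x1 : ∀ v, d2 (x1 * v) = p12 • (x1 * d2 v))
    (hL2x2 : ∀ v, d2 (x2 * v) = v + q • (x2 * d2 v)) :
    d1 C = (q ^ 2 * (1 - (q ^ 3)⁻¹) ^ 2) • (x2 * D)
        + (p21 * (1 - (q ^ 3)⁻¹) * (q ^ 3 - q ^ 2 - q)) • E ∧
      d2 C = 0 := by
  have h3 : (q : k) ^ 3 ≠ 0 := pow_ne_zero _ hq
  have hq3 : q ^ 3 * (p12 * p21) = 1 := by rw [hp]; exact mul_inv_cancel₀ h3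
  subst hC hE hD hB
  constructor
  · simp only [mul_sub, sub_mul, mul_add, add_mul, smul_add, smul_sub, smul_mul_assoc,
      mul_smul_comm, smul_smul, mul_assoc,
      map_sub, map_add, map_smul, hL1x1, hL1x2, hd1x1, hd1x2, hd1one,
      mul_one, one_mul, smul_zero, mul_zero, zero_mul, add_zero, zero_add]
    rw [← hp]
    match_scalars
    · linear_combination (-1 + p12*p21 + q*p12*p21 - q*p12^2*p21^2 + q^2 - q^2*p12^2*p21^2
        + q^3*p12*p21 - q^3*p12^2*p21^2 + q^5*p12^2*p21^2 - q^5*p12^3*p21^3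
        + q^6*p12^2*p21^2 - q^6*p12^3*p21^3) * hq3
    · linear_combination (-(q*p21) + q*p12*p21^2 - q^2*p21 + q^2*p12*p21^2
        - q^5*p12*p21^2 + q^5*p12^2*p21^3) * hq3
    · linear_combination (p12 - p12^2*p21 + q*p12 - q*p12^2*p21 - q^2*p12 + q^2*p12^2*p21
        - q^3*p12 + q^3*p12^2*p21 - q^6*p12^3*p21^2 + q^6*p12^4*p21^3) * hq3
    · linear_combination (-(q*p12^2) + q*p12^3*p21 + q^3*p12^2 - 2*q^3*p12^3*p21
        + q^3*p12^4*p21^2) * hq3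
  · simp only [mul_sub, sub_mul, mul_add, add_mul, smul_add, smul_sub, smul_mul_assoc,
      mul_smul_comm, smul_smul, mul_assoc,
      map_sub, map_add, map_smul, hL2x1, hL2x2, hd2x1, hd2x2, hd2one,
      mul_one, one_mul, smul_zero, mul_zero, zero_mul, add_zero, zero_add]
    match_scalars <;> ring
end

section
/- In the free algebra k⟨x₁,x₂⟩ with bicharacter p (p₂₂=q, p₁₁=q³, p₁₂p₂₁=q⁻³) and skew derivations ∂ᵢ, one has ∂₂([x₂,x₁]) = (1−q⁻³)x₁, ∂₂([x₂,[x₂,x₁]]) = (1+q)(1−q⁻²)[x₂,x₁], and ∂₂([x₂,[x₂,[x₂,x₁]]]) = (1 + q(1+q)(1−q⁻²) − q⁴·p₁₂p₂₁)[x₂,[x₂,x₁]], i.e. the coefficient is 1 + (q+q²)(1−q⁻²) − q. -/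
set_option maxHeartbeats 1600000


/-- Derivatives under `∂₂` of the left-sided skew commutators:
`∂₂([x₂,x₁]) = (1−q⁻³)x₁`, `∂₂([x₂,[x₂,x₁]]) = (1+q)(1−q⁻²)[x₂,x₁]`, and
`∂₂([x₂,[x₂,[x₂,x₁]]]) = (1+(q+q²)(1−q⁻²)−q)[x₂,[x₂,x₁]]`. -/
theorem stmt13 {k : Type*} [Field k] (q p12 p21 : k) (hq : q ≠ 0)
    (hp : p12 * p21 = (q ^ 3)⁻¹)
    (x1 x2 B' D' : FreeAlgebra k (Fin 2))
    (hx1 : x1 = FreeAlgebra.ι k (0 : Fin 2)) (hx2 : x2 = FreeAlgebra.ι k (1 : Fin 2))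
    (hB' : B' = x2 * x1 - p21 • (x1 * x2))
    (hD' : D' = x2 * B' - (q * p21) • (B' * x2))
    (d2 : FreeAlgebra k (Fin 2) →ₗ[k] FreeAlgebra k (Fin 2))
    (hd2one : d2 1 = 0)
    (hd2x1 : d2 x1 = 0) (hd2x2 : d2 x2 = 1)
    (hL2x1 : ∀ v, d2 (x1 * v) = p12 • (x1 * d2 v))
    (hL2x2 : ∀ v, d2 (x2 * v) = v + q • (x2 * d2 v)) :
    d2 B' = (1 - (q ^ 3)⁻¹) • x1 ∧
    d2 D' = ((1 + q) * (1 - (q ^ 2)⁻¹)) • B' ∧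
    d2 (x2 * D' - (q ^ 2 * p21) • (D' * x2))
      = (1 + (q + q ^ 2) * (1 - (q ^ 2)⁻¹) - q) • D' := by
  have hq3 : q ^ 3 ≠ 0 := pow_ne_zero _ hq
  have hp21 : p21 ≠ 0 := by
    intro h; rw [h, mul_zero] at hp; exact (inv_ne_zero hq3) hp.symm
  have hp12 : p12 = (q ^ 3)⁻¹ * p21⁻¹ := by
    field_simp at hp ⊢; linear_combination hp
  subst hB' hD'
  refine ⟨?_, ?_, ?_⟩ <;>
  · simp only [mul_sub, sub_mul, mul_add, add_mul, mul_smul_comm, smul_mul_assoc, mul_assoc, map_sub,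
      map_smul, hL2x2, hL2x1, hd2x1, hd2x2, hd2one, mul_zero, smul_zero, mul_one,
      sub_zero, zero_sub, add_zero, zero_add, smul_sub, smul_add, smul_smul]
    match_scalars <;> subst hp12 <;> field_simp <;> ring
end

section
/- In the free algebra k⟨x₁,x₂⟩ with bicharacter p (p₂₂=q, p₁₁=q³, p₁₂p₂₁=q⁻³), one has ∂₁([[x₁,x₂],[x₂,[x₂,x₁]]]) = (1−q⁻³)·[x₂,[x₂,[x₂,x₁]]], where ∂₁ is the skew derivation with ∂₁(x₁)=1, ∂₁(x₂)=0. -/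
/-! The skew Leibniz rule `∂₁(u v) = ∂₁(u) v + χ u ∂₁(v)` holds for `u = x₁, x₂` and propagates to
products and skew commutators, with multiplicative twist `χ`. Now `∂₁[x₂,x₁] = 0`, hence
`T = [x₂,[x₂,x₁]]` has `∂₁T = 0`, while `∂₁[x₁,x₂] = (1 - p₁₂p₂₁) x₂ = (1 - q⁻³) x₂`. So the rule
for the outer bracket `[[x₁,x₂],T]_c` gives `(1 - q⁻³)(x₂ T - c χ_T T x₂)` with `χ_T = p₂₁²q³`,
and `c χ_T = q⁸(p₁₂p₂₁)²p₂₁ = q²p₂₁`. -/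

section SkewLeibniz

variable {k A : Type*} [CommRing k] [Ring A] [Algebra k A]

/-- For `d = ∂₁` and homogeneous `u`, the twist is `χ = p(u, x₁)`. -/
def SkewLeibnizAt (d : A →ₗ[k] A) (χ : k) (u : A) : Prop :=
  ∀ v, d (u * v) = d u * v + χ • (u * d v)

namespace SkewLeibnizAt

variable {d : A →ₗ[k] A} {χ ψ : k} {u w : A}

theorem mul (hu : SkewLeibnizAt d χ u) (hw : SkewLeibnizAt d ψ w) :
    SkewLeibnizAt d (χ * ψ) (u * w) := fun v => by
  rw [mul_assoc, hu, hw, hu w]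
  simp only [mul_add, add_mul, mul_smul_comm, smul_mul_assoc, smul_add, smul_smul, mul_assoc,
    add_assoc]

theorem smul (hu : SkewLeibnizAt d χ u) (c : k) : SkewLeibnizAt d χ (c • u) := fun v => by
  rw [smul_mul_assoc, map_smul, map_smul, hu, smul_add, smul_mul_assoc, smul_mul_assoc,
    smul_comm c χ]

theorem sub (hu : SkewLeibnizAt d χ u) (hw : SkewLeibnizAt d χ w) :
    SkewLeibnizAt d χ (u - w) := fun v => by
  rw [sub_mul, map_sub, map_sub, hu, hw]
  simp only [sub_mul, smul_sub]
  abel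

theorem skewComm (hu : SkewLeibnizAt d χ u) (hw : SkewLeibnizAt d ψ w) (c : k) :
    SkewLeibnizAt d (χ * ψ) (u * w - c • (w * u)) :=
  (hu.mul hw).sub (by rw [mul_comm χ]; exact (hw.mul hu).smul c)

theorem map_skewComm (hu : SkewLeibnizAt d χ u) (hw : SkewLeibnizAt d ψ w) (c : k) :
    d (u * w - c • (w * u)) = d u * w + χ • (u * d w) - c • (d w * u + ψ • (w * d u)) := by
  rw [map_sub, map_smul, hu, hw]

end SkewLeibnizAt

end SkewLeibniz

theorem stmt14_general {k : Type*} [Field k] (q p12 p21 : k) (hq : q ≠ 0)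
    (hp : p12 * p21 = (q ^ 3)⁻¹)
    (x1 x2 B B' T : FreeAlgebra k (Fin 2))
    (hB : B = x1 * x2 - p12 • (x2 * x1))
    (hB' : B' = x2 * x1 - p21 • (x1 * x2))
    (hT : T = x2 * B' - (q * p21) • (B' * x2))
    (d1 : FreeAlgebra k (Fin 2) →ₗ[k] FreeAlgebra k (Fin 2))
    (hd1x1 : d1 x1 = 1) (hd1x2 : d1 x2 = 0)
    (hL1x1 : ∀ v, d1 (x1 * v) = v + q ^ 3 • (x1 * d1 v))
    (hL1x2 : ∀ v, d1 (x2 * v) = p21 • (x2 * d1 v)) :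
    d1 (B * T - (q ^ 3 * p12 ^ 2 * p21 * q ^ 2) • (T * B))
      = (1 - (q ^ 3)⁻¹) • (x2 * T - (q ^ 2 * p21) • (T * x2)) := by
  have h1 : SkewLeibnizAt d1 (q ^ 3) x1 := fun v => by rw [hd1x1, one_mul, hL1x1]
  have h2 : SkewLeibnizAt d1 p21 x2 := fun v => by rw [hd1x2, zero_mul, zero_add, hL1x2]
  have hB'L : SkewLeibnizAt d1 (p21 * q ^ 3) B' := hB' ▸ h2.skewComm h1 p21
  have hTL : SkewLeibnizAt d1 (p21 * (p21 * q ^ 3)) T := hT ▸ h2.skewComm hB'L (q * p21)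
  have hBL : SkewLeibnizAt d1 (q ^ 3 * p21) B := hB ▸ h1.skewComm h2 p12
  have dB' : d1 B' = 0 := by
    rw [hB', h2.map_skewComm h1, hd1x1, hd1x2]
    simp
  have dT : d1 T = 0 := by
    rw [hT, h2.map_skewComm hB'L, dB', hd1x2]
    simp
  have dB : d1 B = (1 - (q ^ 3)⁻¹) • x2 := by
    rw [hB, h1.map_skewComm h2, hd1x1, hd1x2, ← hp]
    simp [sub_smul, smul_smul]
  rw [hBL.map_skewComm hTL, dT, dB]
  simp only [mul_zero, smul_zero, add_zero, zero_mul, zero_add, smul_mul_assoc, mul_smul_comm,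
    smul_smul, smul_sub]
  congr 2
  have hc : q ^ 3 * p12 ^ 2 * p21 * q ^ 2 * (p21 * (p21 * q ^ 3)) = q ^ 2 * p21 := by
    calc _ = q ^ 8 * (p12 * p21) ^ 2 * p21 := by ring
      _ = q ^ 2 * p21 := by rw [hp]; field_simp
  linear_combination (1 - (q ^ 3)⁻¹) * hc

/-- `∂₁([[x₁,x₂],[x₂,[x₂,x₁]]]) = (1−q⁻³)·[x₂,[x₂,[x₂,x₁]]]` in `k⟨x₁,x₂⟩`. -/
theorem stmt14 {k : Type*} [Field k] (q p12 p21 : k) (hq : q ≠ 0)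
    (hp : p12 * p21 = (q ^ 3)⁻¹)
    (x1 x2 B B' T : FreeAlgebra k (Fin 2))
    (hx1 : x1 = FreeAlgebra.ι k (0 : Fin 2)) (hx2 : x2 = FreeAlgebra.ι k (1 : Fin 2))
    (hB : B = x1 * x2 - p12 • (x2 * x1))
    (hB' : B' = x2 * x1 - p21 • (x1 * x2))
    (hT : T = x2 * B' - (q * p21) • (B' * x2))
    (d1 : FreeAlgebra k (Fin 2) →ₗ[k] FreeAlgebra k (Fin 2))
    (hd1one : d1 1 = 0)
    (hd1x1 : d1 x1 = 1) (hd1x2 : d1 x2 = 0)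
    (hL1x1 : ∀ v, d1 (x1 * v) = v + q ^ 3 • (x1 * d1 v))
    (hL1x2 : ∀ v, d1 (x2 * v) = p21 • (x2 * d1 v)) :
    d1 (B * T - (q ^ 3 * p12 ^ 2 * p21 * q ^ 2) • (T * B))
      = (1 - (q ^ 3)⁻¹) • (x2 * T - (q ^ 2 * p21) • (T * x2)) :=
  stmt14_general q p12 p21 hq hp x1 x2 B B' T hB hB' hT d1 hd1x1 hd1x2 hL1x1 hL1x2
end
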